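/- arXiv:1812.06420 — 5 statements merged into one kernel-verified Lean document; each statement's English description precedes it below -/
import Mathlib

section
/- A point z ∈ X is a peak point if and only if for every neighborhood V of z (in X) there exists u ∈ SH(J) such that u < 0 on X, u(z) = −1, and u ≤ −2 on X \ V. -/
open MeasureTheory Topology Metric Set ENNReal

noncomputable instance (n : ℕ) : MeasurableSpace (EuclideanSpace ℂ (Fin n)) := borel _
instance (n : ℕ) : BorelSpace (EuclideanSpace ℂ (Fin n)) := ⟨rfl⟩

/-- The positive part of an extended real number, as an element of `ℝ≥0∞`. -/
noncomputable def EReal.toENNReal' (x : EReal) : ℝ≥0∞ :=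
  if x = ⊤ then ⊤ else ENNReal.ofReal x.toReal

/-- The integral of an `EReal`-valued function: the integral of its positive part minus the
integral of its negative part (computed in `EReal`). -/
noncomputable def eint {α : Type*} [MeasurableSpace α] (μ : Measure α) (u : α → EReal) : EReal :=
  ((∫⁻ x, (u x).toENNReal' ∂μ : ℝ≥0∞) : EReal) - ((∫⁻ x, (-u x).toENNReal' ∂μ : ℝ≥0∞) : EReal)

/-- The (closed) support of a measure: points all of whose open neighbourhoods have positive
measure. -/
def msupp {α : Type*} [TopologicalSpace α] [MeasurableSpace α] (μ : Measure α) : Set α :=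
  {x | ∀ U : Set α, IsOpen U → x ∈ U → 0 < μ U}

/-- The class `SH(J)`: upper semicontinuous functions with values in `[-∞, ∞)` satisfying the
sub-mean value inequality with respect to every measure in every `J z`. -/
def IsSH {α : Type*} [TopologicalSpace α] [MeasurableSpace α]
    (J : α → Set (Measure α)) (u : α → EReal) : Prop :=
  UpperSemicontinuous u ∧ (∀ z, u z ≠ ⊤) ∧ ∀ z, ∀ μ ∈ J z, u z ≤ eint μ u

/-- Continuous real-valued members of `SH(J)`. -/
def IsSHR {α : Type*} [TopologicalSpace α] [MeasurableSpace α]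
    (J : α → Set (Measure α)) (u : α → ℝ) : Prop :=
  Continuous u ∧ IsSH J (fun x => (u x : EReal))

/-- The Choquet boundary: points whose only Jensen measure is the Dirac measure. -/
def choquet {α : Type*} [TopologicalSpace α] [MeasurableSpace α]
    (J : α → Set (Measure α)) : Set α := {z | J z = {Measure.dirac z}}

/-- `z` is a peak point: there is `u ∈ SH(J)` with `u z = 0` and `u < 0` elsewhere. -/
def IsPeakPt {α : Type*} [TopologicalSpace α] [MeasurableSpace α]
    (J : α → Set (Measure α)) (z : α) : Prop :=
  ∃ u : α → EReal, IsSH J u ∧ u z = 0 ∧ ∀ w, w ≠ z → u w < 0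

/-- The harmonic measure `ω(z, E, X)`. -/
noncomputable def hm {α : Type*} [TopologicalSpace α] [MeasurableSpace α]
    (J : α → Set (Measure α)) (z : α) (E : Set α) : ℝ≥0∞ :=
  ⨅ (V : Set α) (_ : IsOpen V) (_ : E ⊆ V), ⨆ μ ∈ J z, μ V

namespace PeakAux

lemma toENNReal'_coe (r : ℝ) : ((r : ℝ) : EReal).toENNReal' = ENNReal.ofReal r := by
  simp [EReal.toENNReal']

lemma toENNReal'_mono : Monotone EReal.toENNReal' := by
  intro x y h
  unfold EReal.toENNReal'
  rcases eq_or_ne y ⊤ with hy | hy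
  · simp [hy]
  · have hx : x ≠ ⊤ := fun h' => hy (top_le_iff.mp (h' ▸ h))
    rw [if_neg hx, if_neg hy]
    rcases eq_or_ne x ⊥ with hb | hb
    · simp [hb]
    · exact ENNReal.ofReal_le_ofReal (EReal.toReal_le_toReal h hb hy)

lemma eint_mono {α : Type*} [MeasurableSpace α] {μ : Measure α} {u v : α → EReal}
    (h : ∀ x, u x ≤ v x) : eint μ u ≤ eint μ v := by
  refine EReal.sub_le_sub ?_ ?_
  · exact EReal.coe_ennreal_le_coe_ennreal_iff.mpr
      (lintegral_mono fun x => toENNReal'_mono (h x))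
  · exact EReal.coe_ennreal_le_coe_ennreal_iff.mpr
      (lintegral_mono fun x => toENNReal'_mono (EReal.neg_le_neg_iff.mpr (h x)))

lemma eint_coe_nonpos {α : Type*} [MeasurableSpace α] {μ : Measure α} {f : α → ℝ}
    (hf : ∀ x, f x ≤ 0) :
    eint μ (fun x => (f x : EReal)) =
      - ((∫⁻ x, ENNReal.ofReal (-f x) ∂μ : ℝ≥0∞) : EReal) := by
  unfold eint
  have h1 : ∀ x, ((f x : ℝ) : EReal).toENNReal' = 0 := fun x => by
    rw [toENNReal'_coe]; exact ENNReal.ofReal_eq_zero.mpr (hf x)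
  have h2 : ∀ x, (-((f x : ℝ) : EReal)).toENNReal' = ENNReal.ofReal (-f x) := fun x => by
    rw [← EReal.coe_neg, toENNReal'_coe]
  simp only [h1, h2, lintegral_const, zero_mul]
  rw [show ((0 : ℝ≥0∞) : EReal) = 0 from rfl, zero_sub]

lemma submean_iff {α : Type*} [MeasurableSpace α] {μ : Measure α} {f : α → ℝ}
    (hf : ∀ x, f x ≤ 0) {a : ℝ} (ha : a ≤ 0) :
    ((a : ℝ) : EReal) ≤ eint μ (fun x => (f x : EReal)) ↔
      ∫⁻ x, ENNReal.ofReal (-f x) ∂μ ≤ ENNReal.ofReal (-a) := by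
  rw [eint_coe_nonpos hf]
  set C : ℝ≥0∞ := ∫⁻ x, ENNReal.ofReal (-f x) ∂μ with hC
  have h1 : ((a : ℝ) : EReal) ≤ -(C : EReal) ↔ (C : EReal) ≤ ((-a : ℝ) : EReal) := by
    rw [EReal.coe_neg, ← EReal.neg_le_neg_iff, neg_neg]
  rw [h1]
  have h2 : ((-a : ℝ) : EReal) = ((ENNReal.ofReal (-a) : ℝ≥0∞) : EReal) := by
    rw [EReal.coe_ennreal_ofReal, max_eq_left (neg_nonneg.mpr ha)]
  rw [h2, EReal.coe_ennreal_le_coe_ennreal_iff]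

lemma eint_const_nonpos {α : Type*} [MeasurableSpace α] {μ : Measure α}
    [IsProbabilityMeasure μ] {c : ℝ} (hc : c ≤ 0) :
    eint μ (fun _ : α => ((c : ℝ) : EReal)) = ((c : ℝ) : EReal) := by
  rw [eint_coe_nonpos (fun _ => hc), lintegral_const, measure_univ, mul_one,
    EReal.coe_ennreal_ofReal, max_eq_left (neg_nonneg.mpr hc), EReal.coe_neg, neg_neg]

lemma coe_neg_one : ((-1 : ℝ) : EReal) = -1 := by
  rw [show ((-1:ℝ)) = -(1:ℝ) from rfl, EReal.coe_neg, EReal.coe_one]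

lemma coe_neg_two : ((-2 : ℝ) : EReal) = -2 := by
  rw [show ((-2:ℝ)) = -(2:ℝ) from rfl, EReal.coe_neg]
  norm_num
  rfl

/-- truncation of an `EReal` function at level `c`, as a real function. -/
noncomputable def trunc {α : Type*} (u : α → EReal) (c : ℝ) : α → ℝ :=
  fun w => (max (u w) ((c : ℝ) : EReal)).toReal

section trunc
variable {α : Type*} [TopologicalSpace α] [MeasurableSpace α]
  {J : α → Set (Measure α)} {u : α → EReal} {c : ℝ}

omit [TopologicalSpace α] [MeasurableSpace α] in
lemma trunc_coe (hu : ∀ w, u w ≠ ⊤) (w : α) :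
    ((trunc u c w : ℝ) : EReal) = max (u w) ((c : ℝ) : EReal) := by
  refine EReal.coe_toReal ?_ ?_
  · intro h
    rcases max_eq_iff.mp h with ⟨h1, _⟩ | ⟨h1, _⟩
    · exact hu w h1
    · exact EReal.coe_ne_top c h1
  · intro h
    have : ((c : ℝ) : EReal) ≤ ⊥ := h ▸ le_max_right _ _
    exact (EReal.coe_ne_bot c) (le_bot_iff.mp this)

omit [TopologicalSpace α] [MeasurableSpace α] in
lemma trunc_ge (hu : ∀ w, u w ≠ ⊤) (w : α) : c ≤ trunc u c w := by
  have := (trunc_coe (c := c) hu w) ▸ le_max_right (u w) ((c : ℝ) : EReal)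
  exact_mod_cast this

omit [TopologicalSpace α] [MeasurableSpace α] in
lemma trunc_le_zero (hu : ∀ w, u w ≠ ⊤) (hneg : ∀ w, u w ≤ 0) (hc : c ≤ 0) (w : α) :
    trunc u c w ≤ 0 := by
  have h : max (u w) ((c : ℝ) : EReal) ≤ ((0 : ℝ) : EReal) := by
    refine max_le ?_ ?_
    · exact_mod_cast hneg w
    · exact_mod_cast hc
  have := (trunc_coe (c := c) hu w) ▸ h
  exact_mod_cast this

omit [MeasurableSpace α] in
lemma trunc_usc (hu : UpperSemicontinuous u) (hut : ∀ w, u w ≠ ⊤)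
    (hneg : ∀ w, u w ≤ 0) (hc : c ≤ 0) : UpperSemicontinuous (trunc u c) := by
  have hs : UpperSemicontinuous (fun w => max (u w) ((c : ℝ) : EReal)) := by
    intro x y hy
    rcases max_lt_iff.mp hy with ⟨h1, h2⟩
    filter_upwards [hu x y h1] with w hw
    exact max_lt hw h2
  intro x y hy
  rcases lt_or_ge 0 y with h0 | h0
  · filter_upwards with w
    exact lt_of_le_of_lt (trunc_le_zero hut hneg hc w) h0
  · have hxy : max (u x) ((c : ℝ) : EReal) < ((y : ℝ) : EReal) := by
      rw [← trunc_coe (c := c) hut x]; exact_mod_cast hy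
    filter_upwards [hs x _ hxy] with w hw
    have : ((trunc u c w : ℝ) : EReal) < ((y : ℝ) : EReal) := by
      rw [trunc_coe (c := c) hut w]; exact hw
    exact_mod_cast this

omit [TopologicalSpace α] [MeasurableSpace α] in
lemma trunc_lt_zero (hu : ∀ w, u w ≠ ⊤) (hc : c < 0) {w : α} (hw : u w < 0) :
    trunc u c w < 0 := by
  have h2 : max (u w) ((c : ℝ) : EReal) < ((0 : ℝ) : EReal) := by
    refine max_lt ?_ ?_
    · rw [EReal.coe_zero]; exact hw
    · exact EReal.coe_lt_coe_iff.mpr hc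
  rw [← trunc_coe (c := c) hu w] at h2
  exact_mod_cast h2

omit [TopologicalSpace α] [MeasurableSpace α] in
lemma trunc_eq_const (hu : ∀ w, u w ≠ ⊤) {w : α} (hw : u w ≤ ((c : ℝ) : EReal)) :
    trunc u c w = c := by
  have h := trunc_coe (c := c) hu w
  rw [max_eq_right hw] at h
  exact_mod_cast h

omit [TopologicalSpace α] [MeasurableSpace α] in
lemma trunc_eq_coe (hu : ∀ w, u w ≠ ⊤) {w : α} {a : ℝ} (hw : u w = ((a : ℝ) : EReal))
    (hca : c ≤ a) : trunc u c w = a := by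
  have h := trunc_coe (c := c) hu w
  rw [hw, max_eq_left (EReal.coe_le_coe_iff.mpr hca)] at h
  exact_mod_cast h

lemma trunc_star (hprob : ∀ z, ∀ μ ∈ J z, IsProbabilityMeasure μ)
    (hu : IsSH J u) (hneg : ∀ w, u w ≤ 0) (hc : c ≤ 0) :
    ∀ z', ∀ μ ∈ J z',
      ∫⁻ x, ENNReal.ofReal (-(trunc u c x)) ∂μ ≤ ENNReal.ofReal (-(trunc u c z')) := by
  intro z' μ hμ
  haveI := hprob z' μ hμ
  have hle : ∀ x, u x ≤ ((trunc u c x : ℝ) : EReal) := fun x =>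
    (trunc_coe (c := c) hu.2.1 x).symm ▸ le_max_left _ _
  have hcle : ∀ x, ((c : ℝ) : EReal) ≤ ((trunc u c x : ℝ) : EReal) := fun x =>
    (trunc_coe (c := c) hu.2.1 x).symm ▸ le_max_right _ _
  have key : ((trunc u c z' : ℝ) : EReal) ≤ eint μ (fun x => ((trunc u c x : ℝ) : EReal)) := by
    rw [trunc_coe (c := c) hu.2.1 z']
    refine max_le ?_ ?_
    · exact le_trans (hu.2.2 z' μ hμ) (eint_mono hle)
    · calc ((c : ℝ) : EReal) = eint μ (fun _ => ((c : ℝ) : EReal)) := (eint_const_nonpos hc).symm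
        _ ≤ _ := eint_mono hcle
  exact (submean_iff (trunc_le_zero hu.2.1 hneg hc) (trunc_le_zero hu.2.1 hneg hc z')).mp key

end trunc

lemma isSH_of_real {α : Type*} [TopologicalSpace α] [MeasurableSpace α]
    {J : α → Set (Measure α)} {g : α → ℝ} (husc : UpperSemicontinuous g)
    (hg : ∀ x, g x ≤ 0)
    (hsub : ∀ z', ∀ μ ∈ J z',
      ∫⁻ x, ENNReal.ofReal (-g x) ∂μ ≤ ENNReal.ofReal (-g z')) :
    IsSH J (fun x => ((g x : ℝ) : EReal)) := by
  refine ⟨?_, fun x => EReal.coe_ne_top _, fun z' μ hμ => ?_⟩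
  · exact continuous_coe_real_ereal.comp_upperSemicontinuous husc
      (fun _ _ h => EReal.coe_le_coe_iff.mpr h)
  · exact (submean_iff hg (hg z')).mpr (hsub z' μ hμ)

/-- The recursively shrinking neighbourhood sequence. -/
noncomputable def Vseq {β : Type*} [PseudoMetricSpace β] (z : β) (R : Set β → β → ℝ)
    (δ : ℕ → ℝ) : ℕ → Set β
  | i => Metric.ball z (1/(i+1)) ∩
      ⋂ j ∈ Finset.range i, {w | R (Vseq z R δ j) w < -1 + δ i}
decreasing_by exact Finset.mem_range.mp (by assumption)

lemma Vseq_def {β : Type*} [PseudoMetricSpace β] (z : β) (R : Set β → β → ℝ)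
    (δ : ℕ → ℝ) (i : ℕ) :
    Vseq z R δ i = Metric.ball z (1/(i+1)) ∩
      ⋂ j ∈ Finset.range i, {w | R (Vseq z R δ j) w < -1 + δ i} := by
  rw [Vseq]

end PeakAux

set_option maxHeartbeats 1000000

theorem isPeakPt_iff_strong_peak {n : ℕ} (X : Set (EuclideanSpace ℂ (Fin n)))
    (hXc : IsCompact X) (hXne : X.Nonempty)
    (J : ∀ _ : ↑X, Set (Measure ↑X))
    (hprob : ∀ z : ↑X, ∀ μ ∈ J z, IsProbabilityMeasure μ)
    (hdirac : ∀ z : ↑X, Measure.dirac z ∈ J z)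
    (z : ↑X) :
    IsPeakPt J z ↔
      ∀ V ∈ 𝓝 z, ∃ u : ↑X → EReal, IsSH J u ∧ (∀ w, u w < 0) ∧ u z = -1 ∧
        ∀ w, w ∉ V → u w ≤ -2 := by
  haveI : CompactSpace ↑X := isCompact_iff_compactSpace.mp hXc
  constructor
  · rintro ⟨u, hu, huz, hult⟩ V hV
    have hneg : ∀ w, u w ≤ 0 := by
      intro w
      rcases eq_or_ne w z with rfl | hw
      · exact le_of_eq huz
      · exact (hult w hw).le
    set r : ↑X → ℝ := PeakAux.trunc u (-1) with hrdef
    have husc : UpperSemicontinuous r := PeakAux.trunc_usc hu.1 hu.2.1 hneg (by norm_num)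
    have hr_le : ∀ w, r w ≤ 0 := PeakAux.trunc_le_zero hu.2.1 hneg (by norm_num)
    have hstar := PeakAux.trunc_star (c := -1) hprob hu hneg (by norm_num)
    have hrz : r z = 0 := by
      have h1 : ((r z : ℝ) : EReal) = max (u z) (((-1 : ℝ) : ℝ) : EReal) :=
        PeakAux.trunc_coe hu.2.1 z
      rw [huz, max_eq_left (by exact_mod_cast (by norm_num : ((-1:ℝ)) ≤ 0))] at h1
      exact_mod_cast h1
    have hrneg : ∀ w, w ≠ z → r w < 0 := by
      intro w hw
      have h1 : ((r w : ℝ) : EReal) = max (u w) (((-1 : ℝ) : ℝ) : EReal) :=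
        PeakAux.trunc_coe hu.2.1 w
      have h2 : max (u w) (((-1 : ℝ) : ℝ) : EReal) < ((0 : ℝ) : EReal) := by
        refine max_lt ?_ ?_
        · exact lt_of_lt_of_le (hult w hw) (by norm_num)
        · exact_mod_cast (by norm_num : (-1 : ℝ) < 0)
      rw [← h1] at h2
      exact_mod_cast h2
    -- extract ε
    set W := interior V with hWdef
    have hzW : z ∈ W := mem_interior_iff_mem_nhds.mpr hV
    have hCc : IsCompact Wᶜ := (isOpen_interior.isClosed_compl).isCompact
    obtain ⟨ε, hε, hεC⟩ : ∃ ε : ℝ, 0 < ε ∧ ∀ w ∈ Wᶜ, r w ≤ -ε := by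
      have hcov : Wᶜ ⊆ ⋃ m : ℕ, {w : ↑X | r w < -(1/(m+1))} := by
        intro w hw
        have hwz : w ≠ z := fun e => hw (e ▸ hzW)
        have hpos : 0 < -r w := by linarith [hrneg w hwz]
        obtain ⟨m, hm⟩ := exists_nat_one_div_lt hpos
        exact mem_iUnion.mpr ⟨m, by simp only [mem_setOf_eq]; linarith⟩
      have hopen : ∀ m : ℕ, IsOpen {w : ↑X | r w < -(1/(m+1))} := fun m =>
        (upperSemicontinuous_iff_isOpen_preimage.mp husc) _
      obtain ⟨t, ht⟩ := hCc.elim_finite_subcover _ hopen hcov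
      refine ⟨1/((t.sup id : ℕ)+1), by positivity, fun w hw => ?_⟩
      obtain ⟨m, hmt, hmw⟩ := mem_iUnion₂.mp (ht hw)
      simp only [mem_setOf_eq] at hmw
      have hmM : (m : ℝ) + 1 ≤ (t.sup id : ℕ) + 1 := by
        have : m ≤ t.sup id := Finset.le_sup (f := id) hmt
        exact_mod_cast Nat.succ_le_succ this
      have h3 : (1:ℝ)/((t.sup id : ℕ)+1) ≤ 1/(m+1) :=
        one_div_le_one_div_of_le (by positivity) hmM
      linarith
    -- the function
    set g : ↑X → ℝ := fun w => (2/ε) * r w - 1 with hgdef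
    have hcpos : 0 < 2/ε := by positivity
    have hg_le : ∀ w, g w ≤ -1 := by
      intro w
      have : (2/ε) * r w ≤ 0 := mul_nonpos_of_nonneg_of_nonpos hcpos.le (hr_le w)
      simp only [hgdef]; linarith
    have hg0 : ∀ w, g w ≤ 0 := fun w => le_trans (hg_le w) (by norm_num)
    have hgusc : UpperSemicontinuous g := by
      have hmono : Monotone (fun t : ℝ => (2/ε) * t - 1) := fun a b hab => by
        have := mul_le_mul_of_nonneg_left hab hcpos.le
        dsimp; linarith
      have hcont : Continuous (fun t : ℝ => (2/ε) * t - 1) := by continuity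
      exact hcont.comp_upperSemicontinuous husc hmono
    have hmeas : Measurable (fun w => ENNReal.ofReal (-(r w))) :=
      ENNReal.measurable_ofReal.comp husc.measurable.neg
    have hsub : ∀ z', ∀ μ ∈ J z',
        ∫⁻ x, ENNReal.ofReal (-g x) ∂μ ≤ ENNReal.ofReal (-g z') := by
      intro z' μ hμ
      haveI := hprob z' μ hμ
      have hkey : ∀ w, ENNReal.ofReal (-g w)
          = ENNReal.ofReal (2/ε) * ENNReal.ofReal (-(r w)) + 1 := by
        intro w
        have h1 : -g w = (2/ε) * (-(r w)) + 1 := by simp only [hgdef]; ring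
        rw [h1, ENNReal.ofReal_add (mul_nonneg hcpos.le (by linarith [hr_le w])) (by norm_num),
          ENNReal.ofReal_mul (by positivity), ENNReal.ofReal_one]
      calc ∫⁻ x, ENNReal.ofReal (-g x) ∂μ
          = ∫⁻ x, (ENNReal.ofReal (2/ε) * ENNReal.ofReal (-(r x)) + 1) ∂μ := by
            apply lintegral_congr; intro x; rw [hkey]
        _ = (∫⁻ x, ENNReal.ofReal (2/ε) * ENNReal.ofReal (-(r x)) ∂μ) + ∫⁻ _, 1 ∂μ :=
            lintegral_add_right _ measurable_const
        _ = ENNReal.ofReal (2/ε) * (∫⁻ x, ENNReal.ofReal (-(r x)) ∂μ) + 1 := by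
            rw [lintegral_const_mul _ hmeas, lintegral_const, measure_univ, one_mul]
        _ ≤ ENNReal.ofReal (2/ε) * ENNReal.ofReal (-(r z')) + 1 := by
            gcongr
            exact hstar z' μ hμ
        _ = ENNReal.ofReal (-g z') := (hkey z').symm
    refine ⟨fun w => ((g w : ℝ) : EReal), PeakAux.isSH_of_real hgusc hg0 hsub, ?_, ?_, ?_⟩
    · intro w
      have h1 : g w < 0 := by linarith [hg_le w]
      show ((g w : ℝ) : EReal) < 0
      calc ((g w : ℝ) : EReal) < ((0 : ℝ) : EReal) := EReal.coe_lt_coe_iff.mpr h1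
        _ = 0 := by norm_cast
    · have hgz : g z = -1 := by simp only [hgdef, hrz]; ring
      show ((g z : ℝ) : EReal) = -1
      rw [hgz]; exact PeakAux.coe_neg_one
    · intro w hw
      have hwC : w ∈ Wᶜ := fun hwW => hw (interior_subset hwW)
      have h1 : r w ≤ -ε := hεC w hwC
      have h2 : g w ≤ -3 := by
        have h3 : (2/ε) * r w ≤ (2/ε) * (-ε) := mul_le_mul_of_nonneg_left h1 hcpos.le
        have h4 : (2/ε) * (-ε) = -2 := by field_simp
        simp only [hgdef]; linarith
      have h5 : g w ≤ -2 := by linarith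
      show ((g w : ℝ) : EReal) ≤ -2
      calc ((g w : ℝ) : EReal) ≤ ((-2 : ℝ) : EReal) := EReal.coe_le_coe_iff.mpr h5
        _ = -2 := PeakAux.coe_neg_two
  · intro h
    classical
    obtain ⟨G, hG⟩ : ∃ G : Set ↑X → (↑X → EReal),
        ∀ V, V ∈ 𝓝 z → IsSH J (G V) ∧ (∀ w, G V w < 0) ∧ G V z = -1 ∧
          ∀ w, w ∉ V → G V w ≤ -2 := by
      refine ⟨fun V => if hV : V ∈ 𝓝 z then (h V hV).choose else 0, fun V hV => ?_⟩
      simp only [dif_pos hV]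
      exact (h V hV).choose_spec
    set R : Set ↑X → ↑X → ℝ := fun V => PeakAux.trunc (G V) (-2) with hRdef
    set δ : ℕ → ℝ := fun i => (2/3 : ℝ)^(i+1)/4 with hδdef
    set b : ℕ → ℝ := fun i => (2/3 : ℝ)^(i+1) with hbdef
    have hb_pos : ∀ i, 0 < b i := fun i => pow_pos (by norm_num) _
    have hb_le : ∀ i, b i ≤ 2/3 := by
      intro i
      have := pow_le_pow_of_le_one (by norm_num : (0:ℝ) ≤ 2/3) (by norm_num)
        (Nat.succ_le_succ (Nat.zero_le i))
      simpa using this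
    have hδ_pos : ∀ i, 0 < δ i := fun i => by positivity
    have hδb : ∀ i, δ i = b i / 4 := fun i => rfl
    have hgeo : Summable (fun i : ℕ => (2/3 : ℝ)^i) :=
      summable_geometric_of_lt_one (by norm_num) (by norm_num)
    have hb_sum : Summable b := by
      refine (hgeo.mul_right (2/3 : ℝ)).congr fun i => ?_
      simp only [hbdef, pow_succ]
    have hb_tsum : ∑' i, b i = 2 := by
      have h1 : ∑' i, b i = (∑' i, (2/3:ℝ)^i) * (2/3) := by
        rw [← tsum_mul_right]
        exact tsum_congr fun i => by simp only [hbdef, pow_succ]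
      rw [h1, tsum_geometric_of_lt_one (by norm_num) (by norm_num)]
      norm_num
    have hb_tail : ∀ K : ℕ, ∑' i, b (i + (K+1)) = 2 * b K := by
      intro K
      have h1 : ∀ i, b (i + (K+1)) = (2/3:ℝ)^(K+2) * (2/3)^i := by
        intro i
        simp only [hbdef]
        rw [show i + (K+1) + 1 = (K+2) + i by ring, pow_add]
      rw [tsum_congr h1, tsum_mul_left, tsum_geometric_of_lt_one (by norm_num) (by norm_num)]
      simp only [hbdef]
      rw [show K + 2 = (K+1) + 1 by ring, pow_succ]
      norm_num
      ring
    have hRfacts : ∀ V, V ∈ 𝓝 z →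
        UpperSemicontinuous (R V) ∧ (∀ w, -2 ≤ R V w) ∧ (∀ w, R V w < 0) ∧
        R V z = -1 ∧ (∀ w, w ∉ V → R V w = -2) ∧
        ∀ z', ∀ μ ∈ J z',
          ∫⁻ x, ENNReal.ofReal (-(R V x)) ∂μ ≤ ENNReal.ofReal (-(R V z')) := by
      intro V hV
      obtain ⟨hSH, hlt, hz0, hout⟩ := hG V hV
      have hneg : ∀ w, G V w ≤ 0 := fun w => (hlt w).le
      exact ⟨PeakAux.trunc_usc hSH.1 hSH.2.1 hneg (by norm_num),
        fun w => PeakAux.trunc_ge hSH.2.1 w,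
        fun w => PeakAux.trunc_lt_zero hSH.2.1 (by norm_num) (hlt w),
        PeakAux.trunc_eq_coe hSH.2.1 (by rw [hz0, PeakAux.coe_neg_one]) (by norm_num),
        fun w hw => PeakAux.trunc_eq_const hSH.2.1
          (by rw [PeakAux.coe_neg_two]; exact hout w hw),
        PeakAux.trunc_star hprob hSH hneg (by norm_num)⟩
    set Vs : ℕ → Set ↑X := PeakAux.Vseq z R δ with hVsdef
    have hVs_eq : ∀ i, Vs i = Metric.ball z (1/(i+1)) ∩
        ⋂ j ∈ Finset.range i, {w | R (Vs j) w < -1 + δ i} := by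
      intro i
      rw [hVsdef]
      exact PeakAux.Vseq_def z R δ i
    have hVnb : ∀ i, Vs i ∈ 𝓝 z := by
      intro i
      induction i using Nat.strong_induction_on with
      | _ i ih =>
        have hopen : IsOpen (Vs i) := by
          rw [hVs_eq i]
          refine IsOpen.inter isOpen_ball (isOpen_biInter_finset fun j hj => ?_)
          exact (upperSemicontinuous_iff_isOpen_preimage.mp
            (hRfacts (Vs j) (ih j (Finset.mem_range.mp hj))).1) _
        have hzmem : z ∈ Vs i := by
          rw [hVs_eq i]
          refine ⟨mem_ball_self (by positivity), ?_⟩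
          refine mem_iInter₂.mpr fun j hj => ?_
          have hzj : R (Vs j) z = -1 :=
            (hRfacts (Vs j) (ih j (Finset.mem_range.mp hj))).2.2.2.1
          simp only [mem_setOf_eq, hzj]
          linarith [hδ_pos i]
        exact hopen.mem_nhds hzmem
    set r : ℕ → ↑X → ℝ := fun i => R (Vs i) with hrdef
    have hr_lb : ∀ i w, -2 ≤ r i w := fun i w => (hRfacts (Vs i) (hVnb i)).2.1 w
    have hr_neg : ∀ i w, r i w < 0 := fun i w => (hRfacts (Vs i) (hVnb i)).2.2.1 w
    have hr_z : ∀ i, r i z = -1 := fun i => (hRfacts (Vs i) (hVnb i)).2.2.2.1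
    have hr_out : ∀ i w, w ∉ Vs i → r i w = -2 :=
      fun i w => (hRfacts (Vs i) (hVnb i)).2.2.2.2.1 w
    have hr_usc : ∀ i, UpperSemicontinuous (r i) := fun i => (hRfacts (Vs i) (hVnb i)).1
    have hr_star : ∀ i, ∀ z', ∀ μ ∈ J z',
        ∫⁻ x, ENNReal.ofReal (-(r i x)) ∂μ ≤ ENNReal.ofReal (-(r i z')) :=
      fun i => (hRfacts (Vs i) (hVnb i)).2.2.2.2.2
    set T : ↑X → ℕ → ℝ := fun w i => b i * (-(r i w)) with hTdef
    have hT_nonneg : ∀ w i, 0 ≤ T w i := fun w i =>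
      mul_nonneg (hb_pos i).le (by linarith [hr_neg i w])
    have hT_le : ∀ w i, T w i ≤ 2 * b i := by
      intro w i
      have h1 : -(r i w) ≤ 2 := by linarith [hr_lb i w]
      calc T w i = b i * (-(r i w)) := rfl
        _ ≤ b i * 2 := mul_le_mul_of_nonneg_left h1 (hb_pos i).le
        _ = 2 * b i := by ring
    have hT_sum : ∀ w, Summable (T w) := fun w =>
      Summable.of_nonneg_of_le (hT_nonneg w) (hT_le w) (hb_sum.mul_left 2)
    set N : ↑X → ℝ := fun w => ∑' i, T w i with hNdef
    set U : ↑X → ℝ := fun w => 2 - N w with hUdef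
    have hNz : N z = 2 := by
      have h1 : ∀ i, T z i = b i := by
        intro i
        simp only [hTdef, hr_z i]
        ring
      calc N z = ∑' i, T z i := rfl
        _ = ∑' i, b i := tsum_congr h1
        _ = 2 := hb_tsum
    have hVs_ball : ∀ i w, w ∈ Vs i → dist w z < 1/(i+1) := by
      intro i w hw
      rw [hVs_eq i] at hw
      exact mem_ball.mp hw.1
    have hNgt : ∀ w, w ≠ z → 2 < N w := by
      intro w hw
      have hd : 0 < dist w z := dist_pos.mpr hw
      obtain ⟨M, hM⟩ := exists_nat_one_div_lt hd
      have hout : ∀ i, M ≤ i → w ∉ Vs i := by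
        intro i hi hmem
        have h1 := hVs_ball i w hmem
        have h2 : (1:ℝ)/(i+1) ≤ 1/(M+1) := by
          refine one_div_le_one_div_of_le (by positivity) ?_
          have : (M:ℝ) ≤ i := by exact_mod_cast hi
          linarith
        linarith
      by_cases hex : ∃ i, w ∈ Vs i
      · obtain ⟨i0, hi0⟩ := hex
        have hi0M : i0 ≤ M := by
          by_contra hc
          push_neg at hc
          exact hout i0 hc.le hi0
        obtain ⟨K, hKmem, hKgt⟩ : ∃ K, w ∈ Vs K ∧ ∀ i, K < i → w ∉ Vs i := by
          refine ⟨Nat.findGreatest (fun i => w ∈ Vs i) M,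
            Nat.findGreatest_spec (P := fun i => w ∈ Vs i) hi0M hi0, ?_⟩
          intro i hi
          rcases le_or_gt i M with h1 | h1
          · exact Nat.findGreatest_is_greatest (P := fun i => w ∈ Vs i) hi h1
          · exact hout i h1.le
        have hjK : ∀ j, j < K → r j w < -1 + δ K := by
          intro j hj
          rw [hVs_eq K] at hKmem
          exact mem_iInter₂.mp hKmem.2 j (Finset.mem_range.mpr hj)
        have hsplit := Summable.sum_add_tsum_nat_add (f := T w) (K+1) (hT_sum w)
        have htail : ∑' i, T w (i + (K+1)) = 4 * b K := by
          have h1 : ∀ i, T w (i + (K+1)) = 2 * b (i + (K+1)) := by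
            intro i
            have h2 : r (i + (K+1)) w = -2 := hr_out _ w (hKgt _ (by omega))
            simp only [hTdef, h2]
            ring
          rw [tsum_congr h1, tsum_mul_left, hb_tail K]
          ring
        have hsum_b : ∑ i ∈ Finset.range (K+1), b i = 2 - 2 * b K := by
          have h2 := Summable.sum_add_tsum_nat_add (f := b) (K+1) hb_sum
          rw [hb_tail K, hb_tsum] at h2
          linarith
        have hsum_bK : ∑ i ∈ Finset.range K, b i = 2 - 3 * b K := by
          have h3 := Finset.sum_range_succ b K
          rw [h3] at hsum_b
          linarith
        have hfin : (1 - δ K) * (2 - 3 * b K) ≤ ∑ i ∈ Finset.range K, T w i := by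
          have h1 : ∀ i ∈ Finset.range K, b i * (1 - δ K) ≤ T w i := by
            intro i hi
            have h2 : 1 - δ K ≤ -(r i w) := by linarith [hjK i (Finset.mem_range.mp hi)]
            exact mul_le_mul_of_nonneg_left h2 (hb_pos i).le
          calc (1 - δ K) * (2 - 3 * b K)
              = ∑ i ∈ Finset.range K, b i * (1 - δ K) := by
                rw [← Finset.sum_mul, hsum_bK]; ring
            _ ≤ ∑ i ∈ Finset.range K, T w i := Finset.sum_le_sum h1
        have hKterm : 0 ≤ T w K := hT_nonneg w K
        have hrange : ∑ i ∈ Finset.range (K+1), T w i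
            = ∑ i ∈ Finset.range K, T w i + T w K := Finset.sum_range_succ (T w) K
        have hNsplit : N w = ∑ i ∈ Finset.range (K+1), T w i + ∑' i, T w (i + (K+1)) :=
          hsplit.symm
        have hδK := hδb K
        have hbK := hb_pos K
        have hbK2 := hb_le K
        nlinarith [hfin, hKterm, hrange, htail, hNsplit]
      · push_neg at hex
        have h1 : ∀ i, T w i = 2 * b i := by
          intro i
          have h2 := hr_out i w (hex i)
          simp only [hTdef, h2]
          ring
        have h3 : N w = 4 := by
          calc N w = ∑' i, T w i := rfl
            _ = ∑' i, 2 * b i := tsum_congr h1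
            _ = 2 * ∑' i, b i := tsum_mul_left
            _ = 4 := by rw [hb_tsum]; norm_num
        linarith
    have hNge : ∀ w, 2 ≤ N w := by
      intro w
      rcases eq_or_ne w z with rfl | hw
      · exact hNz.ge
      · exact (hNgt w hw).le
    have hU0 : ∀ w, U w ≤ 0 := by
      intro w
      simp only [hUdef]
      linarith [hNge w]
    have hTlsc : ∀ i, LowerSemicontinuous (fun w => T w i) := by
      intro i
      have hcont : Continuous (fun t : ℝ => b i * (-t)) :=
        continuous_const.mul continuous_neg
      have hanti : Antitone (fun t : ℝ => b i * (-t)) := by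
        intro s t hst
        simp only
        have := mul_le_mul_of_nonneg_left (neg_le_neg hst) (hb_pos i).le
        linarith
      exact hcont.comp_upperSemicontinuous_antitone (hr_usc i) hanti
    have hNlsc : LowerSemicontinuous N := by
      intro x y hy
      have hx : Filter.Tendsto (fun k => ∑ i ∈ Finset.range k, T x i)
          Filter.atTop (𝓝 (N x)) := (hT_sum x).hasSum.tendsto_sum_nat
      have hev : ∃ k, y < ∑ i ∈ Finset.range k, T x i := by
        by_contra hc
        push_neg at hc
        have h4 : N x ≤ y := le_of_tendsto' hx hc
        exact absurd hy (not_lt.mpr h4)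
      obtain ⟨k, hk⟩ := hev
      have hSk : LowerSemicontinuous (fun w => ∑ i ∈ Finset.range k, T w i) :=
        lowerSemicontinuous_sum fun i _ => hTlsc i
      filter_upwards [hSk x y hk] with w hwk
      exact lt_of_lt_of_le hwk (Summable.sum_le_tsum _ (fun i _ => hT_nonneg w i) (hT_sum w))
    have hUusc : UpperSemicontinuous U := by
      intro x y hy
      have h1 : 2 - y < N x := by
        simp only [hUdef] at hy
        linarith
      filter_upwards [hNlsc x (2 - y) h1] with w hwv
      simp only [hUdef]
      linarith
    have hmeasN : ∀ i, Measurable (fun w => ENNReal.ofReal (-(r i w))) := fun i =>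
      ENNReal.measurable_ofReal.comp (hr_usc i).measurable.neg
    have hsub : ∀ z', ∀ μ ∈ J z',
        ∫⁻ x, ENNReal.ofReal (-(U x)) ∂μ ≤ ENNReal.ofReal (-(U z')) := by
      intro z' μ hμ
      haveI := hprob z' μ hμ
      have hUid : ∀ x, -(U x) = N x - 2 := by
        intro x
        simp only [hUdef]
        ring
      have hofN : ∀ x, ENNReal.ofReal (N x) = ∑' i, ENNReal.ofReal (T x i) := fun x =>
        ENNReal.ofReal_tsum_of_nonneg (hT_nonneg x) (hT_sum x)
      have hofT : ∀ x i, ENNReal.ofReal (T x i)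
          = ENNReal.ofReal (b i) * ENNReal.ofReal (-(r i x)) := by
        intro x i
        rw [show T x i = b i * (-(r i x)) from rfl, ENNReal.ofReal_mul (hb_pos i).le]
      have hointegral : ∫⁻ x, ENNReal.ofReal (N x) ∂μ
          = ∑' i, ENNReal.ofReal (b i) * ∫⁻ x, ENNReal.ofReal (-(r i x)) ∂μ := by
        calc ∫⁻ x, ENNReal.ofReal (N x) ∂μ
            = ∫⁻ x, ∑' i, ENNReal.ofReal (b i) * ENNReal.ofReal (-(r i x)) ∂μ := by
              refine lintegral_congr fun x => ?_
              rw [hofN x]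
              exact tsum_congr (hofT x)
          _ = ∑' i, ∫⁻ x, ENNReal.ofReal (b i) * ENNReal.ofReal (-(r i x)) ∂μ :=
              lintegral_tsum fun i => ((hmeasN i).const_mul _).aemeasurable
          _ = ∑' i, ENNReal.ofReal (b i) * ∫⁻ x, ENNReal.ofReal (-(r i x)) ∂μ :=
              tsum_congr fun i => lintegral_const_mul _ (hmeasN i)
      have hbound : ∫⁻ x, ENNReal.ofReal (N x) ∂μ ≤ ENNReal.ofReal (N z') := by
        rw [hointegral, hofN z']
        refine ENNReal.tsum_le_tsum fun i => ?_
        rw [hofT z' i]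
        exact mul_le_mul_right (hr_star i z' μ hμ) _
      have hshift : ∀ x, ENNReal.ofReal (N x - 2) + ENNReal.ofReal 2
          = ENNReal.ofReal (N x) := by
        intro x
        rw [← ENNReal.ofReal_add (by linarith [hNge x]) (by norm_num)]
        norm_num
      have hA : (∫⁻ x, ENNReal.ofReal (N x - 2) ∂μ) + ENNReal.ofReal 2
          = ∫⁻ x, ENNReal.ofReal (N x) ∂μ := by
        have h1 : ∫⁻ x, (ENNReal.ofReal (N x - 2) + ENNReal.ofReal 2) ∂μ
            = (∫⁻ x, ENNReal.ofReal (N x - 2) ∂μ) + ∫⁻ _, ENNReal.ofReal 2 ∂μ :=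
          lintegral_add_right _ measurable_const
        rw [lintegral_const, measure_univ, mul_one] at h1
        rw [← h1]
        exact lintegral_congr fun x => hshift x
      have hfinal : (∫⁻ x, ENNReal.ofReal (N x - 2) ∂μ) + ENNReal.ofReal 2
          ≤ ENNReal.ofReal (N z' - 2) + ENNReal.ofReal 2 := by
        rw [hA, hshift z']
        exact hbound
      have hmain := (ENNReal.add_le_add_iff_right ENNReal.ofReal_ne_top).mp hfinal
      calc ∫⁻ x, ENNReal.ofReal (-(U x)) ∂μ
          = ∫⁻ x, ENNReal.ofReal (N x - 2) ∂μ :=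
            lintegral_congr fun x => by rw [hUid x]
        _ ≤ ENNReal.ofReal (N z' - 2) := hmain
        _ = ENNReal.ofReal (-(U z')) := by rw [hUid z']
    refine ⟨fun w => ((U w : ℝ) : EReal), PeakAux.isSH_of_real hUusc hU0 hsub, ?_, ?_⟩
    · have hUz : U z = 0 := by
        simp only [hUdef, hNz]
        ring
      show ((U z : ℝ) : EReal) = 0
      rw [hUz, EReal.coe_zero]
    · intro w hw
      have h1 : U w < 0 := by
        simp only [hUdef]
        linarith [hNgt w hw]
      show ((U w : ℝ) : EReal) < 0
      calc ((U w : ℝ) : EReal) < ((0:ℝ) : EReal) := EReal.coe_lt_coe_iff.mpr h1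
        _ = 0 := EReal.coe_zero
end

section
/- (Two-constant theorem) Let K and k be real constants with k < K, let Y ⊆ X, and let u ∈ SH(J) satisfy u ≤ K on X and u ≤ k on Y. Then for every z ∈ X, u(z) ≤ k·ω(z,Y,X) + K·(1 − ω(z,Y,X)). -/
open MeasureTheory Topology Metric Set ENNReal

/-!
For `k < a < K` the sublevel set `{u < a}` is an open neighbourhood of `Y`. Since `u ≤ a` on it
and `u ≤ K` elsewhere, the sub-mean value inequality against `μ ∈ J z` gives
`u z ≤ K - (K - a) μ {u < a}`; the supremum over `μ` dominates `ω(z, Y, X)`, so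
`(K - a) ω(z, Y, X) ≤ K - u z`, and letting `a ↓ k` gives the claim.
-/

namespace EReal

lemma toENNReal'_mono : Monotone toENNReal' := by
  intro x y hxy
  unfold toENNReal'
  by_cases hy : y = ⊤
  · simp [hy]
  have hx : x ≠ ⊤ := ne_top_of_le_ne_top hy hxy
  by_cases hxb : x = ⊥
  · simp [hy, hxb]
  simpa [hx, hy] using ENNReal.ofReal_le_ofReal (toReal_le_toReal hxy hxb hy)

lemma toENNReal'_coe (x : ℝ) : (x : EReal).toENNReal' = ENNReal.ofReal x := by
  simp [toENNReal']

end EReal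

section eint

variable {α : Type*} [MeasurableSpace α] {μ : Measure α}

lemma eint_mono {u v : α → EReal} (h : u ≤ v) : eint μ u ≤ eint μ v :=
  EReal.sub_le_sub
    (by exact_mod_cast lintegral_mono fun x => EReal.toENNReal'_mono (h x))
    (by exact_mod_cast lintegral_mono fun x => EReal.toENNReal'_mono (EReal.neg_le_neg_iff.2 (h x)))

lemma eint_coe_of_integrable {f : α → ℝ} (hf : Integrable f μ) :
    eint μ (fun x => (f x : EReal)) = ((∫ x, f x ∂μ : ℝ) : EReal) := by
  have hneg : ∫⁻ x, ENNReal.ofReal (-f x) ∂μ ≠ ∞ := hf.neg.lintegral_lt_top.ne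
  simp only [eint, ← EReal.coe_neg, EReal.toENNReal'_coe]
  rw [integral_eq_lintegral_pos_part_sub_lintegral_neg_part hf, EReal.coe_sub,
    EReal.coe_ennreal_toReal hf.lintegral_lt_top.ne,
    EReal.coe_ennreal_toReal hneg]

lemma eint_le_of_le_piecewise [IsProbabilityMeasure μ] {u : α → EReal} {V : Set α}
    (hV : MeasurableSet V) {a b : ℝ} (ha : ∀ x ∈ V, u x ≤ a) (hb : ∀ x ∉ V, u x ≤ b) :
    eint μ u ≤ ((a * μ.real V + b * (1 - μ.real V) : ℝ) : EReal) := by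
  classical
  have hle : u ≤ fun x => ((V.piecewise (fun _ => a) (fun _ => b) x : ℝ) : EReal) := by
    intro x
    by_cases hx : x ∈ V
    · simpa [hx] using ha x hx
    · simpa [hx] using hb x hx
  have hIa : IntegrableOn (fun _ => a) V μ := (integrable_const a).integrableOn
  have hIb : IntegrableOn (fun _ => b) Vᶜ μ := (integrable_const b).integrableOn
  refine (eint_mono hle).trans_eq ?_
  rw [eint_coe_of_integrable (Integrable.piecewise hV hIa hIb), integral_piecewise hV hIa hIb,
    setIntegral_const, setIntegral_const, measureReal_compl hV, probReal_univ]
  simp only [smul_eq_mul]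
  ring_nf

end eint

section harmonicMeasure

variable {α : Type*} [TopologicalSpace α] [MeasurableSpace α] {J : α → Set (Measure α)}

lemma hm_le_iSup_of_isOpen {z : α} {E V : Set α} (hV : IsOpen V) (hEV : E ⊆ V) :
    hm J z E ≤ ⨆ μ ∈ J z, μ V :=
  iInf₂_le_of_le V hV (iInf_le _ hEV)

variable [OpensMeasurableSpace α]

lemma IsSH.sub_mul_hm_le_sub (hJ : ∀ z, ∀ μ ∈ J z, IsProbabilityMeasure μ) {u : α → EReal}
    (hu : IsSH J u) {K a x : ℝ} (huK : ∀ w, u w ≤ K) (haK : a ≤ K) {Y : Set α}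
    (hYa : ∀ w ∈ Y, u w < a) {z : α} (hx : (x : EReal) ≤ u z) :
    (K - a) * (hm J z Y).toReal ≤ K - x := by
  set V := u ⁻¹' Iio (a : EReal)
  have hV : IsOpen V := hu.1.isOpen_preimage a
  have hxK : x ≤ K := EReal.coe_le_coe_iff.1 (hx.trans (huK z))
  have hmean : ∀ μ ∈ J z, ENNReal.ofReal (K - a) * μ V ≤ ENNReal.ofReal (K - x) := by
    intro μ hμ
    have := hJ z μ hμ
    have hbound : (x : EReal) ≤ ((a * μ.real V + K * (1 - μ.real V) : ℝ) : EReal) :=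
      hx.trans <| (hu.2.2 z μ hμ).trans <|
        eint_le_of_le_piecewise hV.measurableSet (fun w hw => le_of_lt hw) (fun w _ => huK w)
    rw [← ofReal_measureReal (measure_ne_top μ V), ← ENNReal.ofReal_mul (by linarith)]
    exact ENNReal.ofReal_le_ofReal (by nlinarith [EReal.coe_le_coe_iff.1 hbound])
  have hhm : ENNReal.ofReal (K - a) * hm J z Y ≤ ENNReal.ofReal (K - x) :=
    calc ENNReal.ofReal (K - a) * hm J z Y
        ≤ ENNReal.ofReal (K - a) * ⨆ μ ∈ J z, μ V := by
          gcongr; exact hm_le_iSup_of_isOpen hV hYa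
      _ = ⨆ μ ∈ J z, ENNReal.ofReal (K - a) * μ V := by simp only [ENNReal.mul_iSup]
      _ ≤ ENNReal.ofReal (K - x) := iSup₂_le hmean
  have := ENNReal.toReal_mono ENNReal.ofReal_ne_top hhm
  rwa [ENNReal.toReal_mul, ENNReal.toReal_ofReal (by linarith),
    ENNReal.toReal_ofReal (by linarith)] at this

end harmonicMeasure

theorem two_constant_theorem_general {n : ℕ} (X : Set (EuclideanSpace ℂ (Fin n)))
    (J : ∀ _ : ↑X, Set (Measure ↑X))
    (hprob : ∀ z : ↑X, ∀ μ ∈ J z, IsProbabilityMeasure μ)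
    (u : ↑X → EReal) (hu : IsSH J u) (K k : ℝ) (hkK : k < K) (Y : Set ↑X)
    (huK : ∀ w : ↑X, u w ≤ (K : EReal)) (huk : ∀ w ∈ Y, u w ≤ (k : EReal)) (z : ↑X) :
    u z ≤ ((k * (hm J z Y).toReal + K * (1 - (hm J z Y).toReal) : ℝ) : EReal) := by
  refine EReal.ge_of_forall_gt_iff_ge.1 fun x hx => EReal.coe_le_coe_iff.2 ?_
  set ω := (hm J z Y).toReal
  have hlevel : ∀ a ∈ Ioo k K, (K - a) * ω ≤ K - x := fun a ha =>
    hu.sub_mul_hm_le_sub hprob huK ha.2.le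
      (fun w hw => (huk w hw).trans_lt (EReal.coe_lt_coe_iff.2 ha.1)) hx.le
  have hlim : (K - k) * ω ≤ K - x :=
    le_of_tendsto (((continuous_const.sub continuous_id).mul continuous_const).tendsto k
      |>.mono_left nhdsWithin_le_nhds)
      (Filter.eventually_of_mem (Ioo_mem_nhdsGT hkK) hlevel)
  linarith

theorem two_constant_theorem {n : ℕ} (X : Set (EuclideanSpace ℂ (Fin n)))
    (hXc : IsCompact X) (hXne : X.Nonempty)
    (J : ∀ _ : ↑X, Set (Measure ↑X))
    (hprob : ∀ z : ↑X, ∀ μ ∈ J z, IsProbabilityMeasure μ)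
    (hdirac : ∀ z : ↑X, Measure.dirac z ∈ J z)
    (u : ↑X → EReal) (hu : IsSH J u) (K k : ℝ) (hkK : k < K) (Y : Set ↑X)
    (huK : ∀ w : ↑X, u w ≤ (K : EReal)) (huk : ∀ w ∈ Y, u w ≤ (k : EReal)) (z : ↑X) :
    u z ≤ ((k * (hm J z Y).toReal + K * (1 - (hm J z Y).toReal) : ℝ) : EReal) :=
  two_constant_theorem_general X J hprob u hu K k hkK Y huK huk z
end

section
/- Assume Edwards' duality hypothesis holds, and assume the weak maximum principle: every continuous real-valued function u ∈ SH(J) satisfies u(z) ≤ sup_{w ∈ B_X} u(w) for all z ∈ X. Then the harmonic measure of the Šilov boundary is identically one: ω(z, B_X, X) = 1 for every z ∈ X. -/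
open MeasureTheory Topology Metric Set ENNReal

/-- Edwards' duality hypothesis: the sup of continuous real-valued `SH(J)` minorants of `f`
at `z` equals the inf of integrals of `f` against Jensen measures at `z`. -/
def Edwards {α : Type*} [TopologicalSpace α] [MeasurableSpace α]
    (J : α → Set (Measure α)) : Prop :=
  ∀ f : C(α, ℝ), ∀ z : α,
    sSup {r : ℝ | ∃ ψ : α → ℝ, IsSHR J ψ ∧ (∀ x, ψ x ≤ f x) ∧ ψ z = r} =
      ⨅ μ : J z, ∫ x, f x ∂(μ : Measure α)

theorem hm_silov_eq_one {n : ℕ} (X : Set (EuclideanSpace ℂ (Fin n)))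
    (hXc : IsCompact X) (hXne : X.Nonempty)
    (J : ∀ _ : ↑X, Set (Measure ↑X))
    (hprob : ∀ z : ↑X, ∀ μ ∈ J z, IsProbabilityMeasure μ)
    (hdirac : ∀ z : ↑X, Measure.dirac z ∈ J z)
    (hEd : Edwards J)
    (hmax : ∀ ψ : ↑X → ℝ, IsSHR J ψ → ∀ z : ↑X, ψ z ≤ sSup (ψ '' closure (choquet J))) :
    ∀ z : ↑X, hm J z (closure (choquet J)) = 1 := by
  intro z
  haveI : CompactSpace ↑X := isCompact_iff_compactSpace.mp hXc
  haveI : Nonempty ↥(J z) := ⟨⟨_, hdirac z⟩⟩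
  set B := closure (choquet J) with hBdef
  have hBclosed : IsClosed B := isClosed_closure
  apply le_antisymm
  · refine le_trans (iInf_le _ Set.univ) ?_
    refine le_trans (iInf_le _ isOpen_univ) ?_
    refine le_trans (iInf_le _ (Set.subset_univ _)) ?_
    refine iSup₂_le fun μ hμ => ?_
    haveI := hprob z μ hμ
    simp [measure_univ]
  · refine le_iInf fun V => le_iInf fun hV => le_iInf fun hBV => ?_
    refine ENNReal.le_of_forall_pos_le_add fun ε hε _ => ?_
    -- Urysohn function: 0 on B, 1 on Vᶜ
    obtain ⟨f, hf0, hf1, hf01⟩ := exists_continuous_zero_one_of_isClosed hBclosed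
      (isClosed_compl_iff.mpr hV) (Disjoint.mono_left hBV disjoint_compl_right)
    -- the sup side is ≤ 0
    have hsup_le : sSup {r : ℝ | ∃ ψ : ↑X → ℝ, IsSHR J ψ ∧ (∀ x, ψ x ≤ f x) ∧ ψ z = r} ≤ 0 := by
      refine Real.sSup_le ?_ le_rfl
      rintro r ⟨ψ, hψ, hle, rfl⟩
      refine le_trans (hmax ψ hψ z) (Real.sSup_le ?_ le_rfl)
      rintro y ⟨x, hx, rfl⟩
      calc ψ x ≤ f x := hle x
        _ = 0 := hf0 hx
    have hinf_le : (⨅ μ : J z, ∫ x, f x ∂(μ : Measure ↑X)) ≤ 0 := (hEd f z) ▸ hsup_le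
    have hεpos : (0:ℝ) < (ε:ℝ) := hε
    obtain ⟨μ, hμlt⟩ : ∃ μ : J z, ∫ x, f x ∂(μ : Measure ↑X) < (ε:ℝ) :=
      exists_lt_of_ciInf_lt (lt_of_le_of_lt hinf_le hεpos)
    haveI := hprob z μ μ.2
    set μ0 : Measure ↑X := (μ : Measure ↑X) with hμ0
    -- μ0 Vᶜ ≤ ofReal (∫ f dμ0)
    have hint : Integrable (fun x => f x) μ0 :=
      f.continuous.integrable_of_hasCompactSupport ((isClosed_tsupport _).isCompact)
    have hVc : MeasurableSet Vᶜ := (isClosed_compl_iff.mpr hV).measurableSet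
    have hcompl : μ0 Vᶜ ≤ ENNReal.ofReal (∫ x, f x ∂μ0) := by
      rw [← lintegral_indicator_one hVc,
        ofReal_integral_eq_lintegral_ofReal hint (Filter.Eventually.of_forall fun x => (hf01 x).1)]
      refine lintegral_mono fun x => ?_
      by_cases hx : x ∈ Vᶜ
      · simp [Set.indicator_of_mem hx, hf1 hx]
      · simp [Set.indicator_of_notMem hx]
    have hcompl2 : μ0 Vᶜ ≤ (ε : ℝ≥0∞) := by
      refine hcompl.trans ?_
      rw [← ENNReal.ofReal_coe_nnreal]
      exact ENNReal.ofReal_le_ofReal hμlt.le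
    have hone : (1 : ℝ≥0∞) = μ0 Set.univ := (measure_univ).symm
    calc (1 : ℝ≥0∞) = μ0 Set.univ := hone
      _ = μ0 (V ∪ Vᶜ) := by rw [Set.union_compl_self]
      _ ≤ μ0 V + μ0 Vᶜ := measure_union_le _ _
      _ ≤ (⨆ ν ∈ J z, ν V) + (ε : ℝ≥0∞) := by
          refine add_le_add ?_ hcompl2
          exact le_iSup₂ (f := fun ν (_ : ν ∈ J z) => ν V) μ0 μ.2
end

section
/- Suppose that for every continuous function g : O_X → ℝ there exists a continuous real-valued u ∈ SH(J) on X with u = g on O_X. Then for every continuous function f : B_X → ℝ there exists a continuous real-valued u ∈ SH(J) on X with u = f on B_X. (Implication (2) ⇒ (3) of the paper's theorem characterizing O-regular compact sets.) -/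
open MeasureTheory Topology Metric Set ENNReal

theorem dirichlet_silov_of_dirichlet_choquet {n : ℕ} (X : Set (EuclideanSpace ℂ (Fin n)))
    (hXc : IsCompact X) (hXne : X.Nonempty)
    (J : ∀ _ : ↑X, Set (Measure ↑X))
    (hprob : ∀ z : ↑X, ∀ μ ∈ J z, IsProbabilityMeasure μ)
    (hdirac : ∀ z : ↑X, Measure.dirac z ∈ J z)
    (h : ∀ g : ↑X → ℝ, ContinuousOn g (choquet J) →
      ∃ u : ↑X → ℝ, IsSHR J u ∧ EqOn u g (choquet J)) :
    ∀ f : ↑X → ℝ, ContinuousOn f (closure (choquet J)) →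
      ∃ u : ↑X → ℝ, IsSHR J u ∧ EqOn u f (closure (choquet J)) := by
  intro f hf
  obtain ⟨u, hu, heq⟩ := h f (hf.mono subset_closure)
  refine ⟨u, hu, fun x hx => ?_⟩
  have hne : (𝓝[choquet J] x).NeBot := mem_closure_iff_nhdsWithin_neBot.mp hx
  have h1 : Filter.Tendsto u (𝓝[choquet J] x) (𝓝 (u x)) :=
    (hu.1.continuousAt.continuousWithinAt)
  have h2 : Filter.Tendsto f (𝓝[choquet J] x) (𝓝 (f x)) :=
    ((hf x hx).mono subset_closure)
  exact tendsto_nhds_unique (h1.congr' (eventually_nhdsWithin_of_forall heq)) h2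
end

section
/- Suppose X is a Poisson set for J: for every continuous f : B_X → ℝ there exists a continuous h : X → ℝ with both h ∈ SH(J) and −h ∈ SH(J) (h is J-harmonic) such that h = f on B_X. Then for every z ∈ X the set J_z^b = {μ ∈ J_z : supp μ ⊆ B_X} contains at most one measure. (Implication (1) ⇒ (2) of the paper's theorem on the Dirichlet problem for m-harmonic functions.) -/
open MeasureTheory Topology Metric Set ENNReal

/-!
Given a Jensen measure `μ ∈ J z` carried by the Šilov boundary `B` and a continuous `f`, the
harmonic extension `h` of `f|B` satisfies both `h z ≤ ∫ h dμ` and `-h z ≤ -∫ h dμ`, so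
`∫ f dμ = ∫ h dμ = h z`. Two such measures therefore integrate every bounded continuous function
alike, and finite Borel measures on a metric space are determined by these integrals.
-/

lemma eint_coe_eq_integral {α : Type*} [MeasurableSpace α] {μ : Measure α} {g : α → ℝ}
    (hg : Integrable g μ) : eint μ (fun x => (g x : EReal)) = ∫ x, g x ∂μ := by
  have hpos := ((lintegral_ofReal_le_lintegral_enorm g).trans_lt hg.2).ne
  have hneg : ∫⁻ x, ENNReal.ofReal (-g x) ∂μ ≠ ∞ :=
    ((lintegral_ofReal_le_lintegral_enorm (-g)).trans_lt hg.neg.2).ne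
  simp only [eint, EReal.toENNReal', ← EReal.coe_neg, EReal.coe_ne_top, if_false,
    EReal.toReal_coe]
  rw [integral_eq_lintegral_pos_part_sub_lintegral_neg_part hg, EReal.coe_sub,
    EReal.coe_ennreal_toReal hpos, EReal.coe_ennreal_toReal hneg]

lemma msupp_eq_support {α : Type*} [TopologicalSpace α] [MeasurableSpace α] (μ : Measure α) :
    msupp μ = μ.support := by
  rw [Measure.support_eq_forall_isOpen]
  exact Set.ext fun _ => forall_congr' fun _ => forall_comm

section Harmonic

variable {α : Type*} [TopologicalSpace α] [MeasurableSpace α] {J : α → Set (Measure α)}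
  {h : α → ℝ} {z : α} {μ : Measure α}

lemma IsSHR.le_integral (hh : IsSHR J h) (hμ : μ ∈ J z) (hint : Integrable h μ) :
    h z ≤ ∫ x, h x ∂μ :=
  EReal.coe_le_coe_iff.mp <| eint_coe_eq_integral hint ▸ hh.2.2.2 z μ hμ

lemma integral_eq_of_isSHR_of_isSHR_neg (hh : IsSHR J h) (hnh : IsSHR J (fun x => -h x))
    (hμ : μ ∈ J z) (hint : Integrable h μ) : ∫ x, h x ∂μ = h z := by
  have hneg := hnh.le_integral hμ hint.neg
  rw [integral_neg] at hneg
  linarith [hh.le_integral hμ hint]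

end Harmonic

lemma integral_congr_of_eqOn_of_msupp_subset {α : Type*} [TopologicalSpace α]
    [MeasurableSpace α] [HereditarilyLindelofSpace α] {μ : Measure α} {B : Set α}
    {f g : α → ℝ} (hfg : EqOn f g B) (hμ : msupp μ ⊆ B) :
    ∫ x, f x ∂μ = ∫ x, g x ∂μ :=
  integral_congr_ae <| Filter.mem_of_superset Measure.support_mem_ae
    (msupp_eq_support μ ▸ hμ |>.trans hfg)

theorem boundary_jensen_unique_of_poisson_general {n : ℕ} (X : Set (EuclideanSpace ℂ (Fin n)))
    (hXc : IsCompact X)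
    (J : ∀ _ : ↑X, Set (Measure ↑X))
    (hprob : ∀ z : ↑X, ∀ μ ∈ J z, IsProbabilityMeasure μ)
    (hPoisson : ∀ f : ↑X → ℝ, ContinuousOn f (closure (choquet J)) →
      ∃ h : ↑X → ℝ, IsSHR J h ∧ IsSHR J (fun x => -h x) ∧ EqOn h f (closure (choquet J))) :
    ∀ z : ↑X, ∀ μ ∈ J z, ∀ ν ∈ J z,
      msupp μ ⊆ closure (choquet J) → msupp ν ⊆ closure (choquet J) → μ = ν := by
  have : CompactSpace X := isCompact_iff_compactSpace.mp hXc
  intro z μ hμ ν hν hμB hνB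
  have := hprob z μ hμ
  have := hprob z ν hν
  refine ext_of_forall_integral_eq_of_IsFiniteMeasure fun f => ?_
  obtain ⟨h, hh, hnh, hhf⟩ := hPoisson f f.continuous.continuousOn
  have hint (m : Measure X) [IsFiniteMeasure m] : Integrable h m :=
    hh.1.integrable_of_hasCompactSupport (.of_compactSpace h)
  calc ∫ x, f x ∂μ = ∫ x, h x ∂μ := integral_congr_of_eqOn_of_msupp_subset hhf.symm hμB
    _ = h z := integral_eq_of_isSHR_of_isSHR_neg hh hnh hμ (hint μ)
    _ = ∫ x, h x ∂ν := (integral_eq_of_isSHR_of_isSHR_neg hh hnh hν (hint ν)).symm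
    _ = ∫ x, f x ∂ν := integral_congr_of_eqOn_of_msupp_subset hhf hνB

theorem boundary_jensen_unique_of_poisson {n : ℕ} (X : Set (EuclideanSpace ℂ (Fin n)))
    (hXc : IsCompact X) (hXne : X.Nonempty)
    (J : ∀ _ : ↑X, Set (Measure ↑X))
    (hprob : ∀ z : ↑X, ∀ μ ∈ J z, IsProbabilityMeasure μ)
    (hdirac : ∀ z : ↑X, Measure.dirac z ∈ J z)
    (hPoisson : ∀ f : ↑X → ℝ, ContinuousOn f (closure (choquet J)) →
      ∃ h : ↑X → ℝ, IsSHR J h ∧ IsSHR J (fun x => -h x) ∧ EqOn h f (closure (choquet J))) :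
    ∀ z : ↑X, ∀ μ ∈ J z, ∀ ν ∈ J z,
      msupp μ ⊆ closure (choquet J) → msupp ν ⊆ closure (choquet J) → μ = ν :=
  boundary_jensen_unique_of_poisson_general X hXc J hprob hPoisson
end
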